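/- Let d be an admissible ultra-metric on X̄ = X ∪ X⁻¹ ∪ {e}. If the metric space (X,d) is separable, then the free group F(X) equipped with the Graev ultra-metric δ_u is separable. -/
import Mathlib


/-! Graev ultra-metrics on free groups (after Gao, Savchenko–Zarichnyi and
Shlossberg, "On Graev type ultra-metrics"). -/

namespace GraevStmt

variable {X : Type*}

/-- The alphabet `X̄ = X ∪ X⁻¹ ∪ {e}`: `none` is the letter `e`,
`some (x, true)` is the letter `x` and `some (x, false)` is the letter `x⁻¹`. -/
abbrev Letter (X : Type*) := Option (X × Bool)

/-- The letter `e`. -/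
def eL : Letter X := none

/-- The letter `x`, for `x ∈ X`. -/
def pos (x : X) : Letter X := some (x, true)

/-- The letter `x⁻¹`, for `x ∈ X`. -/
def neg (x : X) : Letter X := some (x, false)

/-- The formal inverse of a letter; `e⁻¹ = e` and `(x⁻¹)⁻¹ = x`. -/
def linv : Letter X → Letter X
  | none => none
  | some (x, b) => some (x, !b)

/-- Interpretation of a letter as an element of the free group `F(X)`. -/
def toF : Letter X → FreeGroup X
  | none => 1
  | some (x, b) => FreeGroup.mk [(x, b)]

/-- The reduced word of a word `w ∈ W(X)` over the alphabet `X̄`, viewed as the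
corresponding element of the free group `F(X)`. -/
def red (w : List (Letter X)) : FreeGroup X := (w.map toF).prod

/-- The canonical irreducible word over the alphabet `X̄` representing a given
element of the free group `F(X)`. -/
def wordOf [DecidableEq X] (w : FreeGroup X) : List (Letter X) :=
  w.toWord.map some

/-- `ρ_u(w, v)`: the maximum of the distances between corresponding letters of
two words of equal length. -/
def rho (d : Letter X → Letter X → ℝ) (w v : List (Letter X)) : ℝ :=
  (List.zipWith d w v).foldr max 0

/-- The Graev ultra-metric `δ_u` on `F(X)` associated with `d`:
`δ_u(w, v) = inf {ρ_u(w*, v*) : lh(w*) = lh(v*), (w*)' = w, (v*)' = v}`. -/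
noncomputable def graev (d : Letter X → Letter X → ℝ) (w v : FreeGroup X) : ℝ :=
  sInf {r : ℝ | ∃ w' v' : List (Letter X), w'.length = v'.length ∧
    red w' = w ∧ red v' = v ∧ r = rho d w' v'}

/-- `d` is an ultra-metric: symmetric, vanishing exactly on the diagonal and
satisfying the strong triangle inequality. -/
def IsUltraMetric {A : Type*} (d : A → A → ℝ) : Prop :=
  (∀ a b, d a b = d b a) ∧ (∀ a b, d a b = 0 ↔ a = b) ∧
    ∀ a b c, d a c ≤ max (d a b) (d b c)

/-- An admissible ultra-metric on the alphabet `X̄`, i.e. an ultra-metric with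
`d(x⁻¹, y⁻¹) = d(x, y)`, `d(x, e) = d(x⁻¹, e)` and `d(x⁻¹, y) = d(x, y⁻¹)`. -/
def IsAdmissible (d : Letter X → Letter X → ℝ) : Prop :=
  IsUltraMetric d ∧ (∀ x y : X, d (neg x) (neg y) = d (pos x) (pos y)) ∧
    (∀ x : X, d (pos x) eL = d (neg x) eL) ∧
    ∀ x y : X, d (neg x) (pos y) = d (pos x) (neg y)

/-- A function `R` on `F(X) × F(X)` is (two-sided) invariant if
`R(uwv, uw'v) = R(w, w')` for all `u, v, w, w'`. -/
def IsInvariant (R : FreeGroup X → FreeGroup X → ℝ) : Prop :=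
  ∀ u v w w' : FreeGroup X, R (u * w * v) (u * w' * v) = R w w'

/-- A match on `{0, …, n-1}`: an involution `θ` such that there are no
`i < j < θ(i) < θ(j)`. -/
def IsMatch {n : ℕ} (θ : Fin n → Fin n) : Prop :=
  (∀ i, θ (θ i) = i) ∧ ∀ i j : Fin n, ¬(i < j ∧ j < θ i ∧ θ i < θ j)

/-- The word `w^θ` associated with a word `w` and a match `θ`:
its `i`-th letter is `x_i` if `θ(i) > i`, `e` if `θ(i) = i`, and
`x_{θ(i)}⁻¹` if `θ(i) < i`. -/
def matchWord (w : List (Letter X)) (θ : Fin w.length → Fin w.length) :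
    List (Letter X) :=
  List.ofFn fun i => if i < θ i then w.get i
    else if θ i = i then eL else linv (w.get (θ i))

/-- `j₂(x, y) = x⁻¹y`. -/
def j2 (p : X × X) : FreeGroup X := (FreeGroup.of p.1)⁻¹ * FreeGroup.of p.2

/-- `j₂*(x, y) = xy⁻¹`. -/
def j2s (p : X × X) : FreeGroup X := FreeGroup.of p.1 * (FreeGroup.of p.2)⁻¹

/-- `ε̃ = ⋃_{w ∈ F(X)} w (j₂(ε) ∪ j₂*(ε)) w⁻¹` for `ε ⊆ X × X`. -/
def tilde (S : Set (X × X)) : Set (FreeGroup X) :=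
  ⋃ w : FreeGroup X, (fun g => w * g * w⁻¹) '' (j2 '' S ∪ j2s '' S)

/-- The extension of an ultra-metric `d` on `X` to the alphabet `X̄` determined
by a base point `x₀`: `d(x, e) = max {d(x, x₀), 1}`, `d(x⁻¹, y⁻¹) = d(x, y)`
and `d(x⁻¹, y) = d(x, y⁻¹) = max {d(x, e), d(y, e)}` for `x, y ∈ X ∪ {e}`. -/
def ext (d : X → X → ℝ) (x₀ : X) : Letter X → Letter X → ℝ
  | none, none => 0
  | some (x, _), none => max (d x x₀) 1
  | none, some (y, _) => max (d y x₀) 1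
  | some (x, true), some (y, true) => d x y
  | some (x, false), some (y, false) => d x y
  | some (x, _), some (y, _) => max (max (d x x₀) 1) (max (d y x₀) 1)

/-- The extension of an ultra-metric `d` of diameter at most `1` on `X` to the
alphabet `X̄`, with `d(x⁻¹, y⁻¹) = d(x, y)` and
`d(x⁻¹, y) = d(x, y⁻¹) = d(x, e) = d(x⁻¹, e) = 1`. -/
def extOne (d : X → X → ℝ) : Letter X → Letter X → ℝ
  | none, none => 0
  | some (x, true), some (y, true) => d x y
  | some (x, false), some (y, false) => d x y
  | _, _ => 1

/-- The homomorphism `α : F(X) → ℤ` extending the constant map `X → {1} ⊆ ℤ`. -/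
def alpha (w : FreeGroup X) : ℤ :=
  Multiplicative.toAdd ((FreeGroup.lift fun _ : X => Multiplicative.ofAdd (1 : ℤ)) w)

/-- `F(q_r) : F(X) → F(X/F_r)`, where `X/F_r` is the quotient of `X` by the
partition into open balls of radius `r` (for an ultra-metric the relation
`d x y < r` is an equivalence relation, so `Quot` of this relation is exactly
this quotient) and `q_r` is the quotient map. -/
def Fq (d : X → X → ℝ) (r : ℝ) :
    FreeGroup X →* FreeGroup (Quot fun x y : X => d x y < r) :=
  FreeGroup.map (Quot.mk _)

/-- The Savchenko–Zarichnyi function `d̂` on `F(X) × F(X)`: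
`d̂(v, w) = 1` if `α(v) ≠ α(w)`, and
`d̂(v, w) = inf {r > 0 : F(q_r)(v) = F(q_r)(w)}` if `α(v) = α(w)`. -/
noncomputable def dHat (d : X → X → ℝ) (v w : FreeGroup X) : ℝ :=
  if alpha v = alpha w then sInf {r : ℝ | 0 < r ∧ Fq d r v = Fq d r w} else 1

lemma red_map_some (l : List (X × Bool)) : red (l.map some) = FreeGroup.mk l := by
  induction l with
  | nil => simp [red, FreeGroup.one_eq_mk]
  | cons p l ih =>
      simp only [List.map_cons, red, List.prod_cons] at *
      rw [ih, toF, FreeGroup.mul_mk]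
      rfl

lemma foldr_max_nonneg (l : List ℝ) : 0 ≤ l.foldr max 0 := by
  induction l with
  | nil => simp
  | cons a l ih => exact le_trans ih (le_max_right _ _)

lemma foldr_max_lt (l : List ℝ) {ε : ℝ} (hε : 0 < ε) (h : ∀ r ∈ l, r < ε) :
    l.foldr max 0 < ε := by
  induction l with
  | nil => simpa
  | cons a l ih =>
      simp only [List.foldr_cons, max_lt_iff]
      exact ⟨h a (by simp), ih fun r hr => h r (by simp [hr])⟩

/-- The last part of Gao's Theorem 2.4: if `(X, d)` is separable, then
`(F(X), δ_u)` is separable. -/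
theorem graev_separable {X : Type*} [Nonempty X]
    (d : Letter X → Letter X → ℝ) (hd : IsAdmissible d)
    (hsep : ∃ D : Set X, D.Countable ∧
      ∀ x : X, ∀ ε : ℝ, 0 < ε → ∃ y ∈ D, d (pos x) (pos y) < ε) :
    ∃ D : Set (FreeGroup X), D.Countable ∧
      ∀ w : FreeGroup X, ∀ ε : ℝ, 0 < ε → ∃ v ∈ D, graev d w v < ε := by
  classical
  obtain ⟨D, hDc, hDd⟩ := hsep
  haveI : Countable D := hDc.to_subtype
  refine ⟨Set.range (fun l : List (D × Bool) =>
      FreeGroup.mk (l.map fun p => (p.1.1, p.2))), Set.countable_range _, ?_⟩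
  intro w ε hε
  set l := w.toWord with hl
  -- choose approximating letters
  have hy : ∀ x : X, ∃ y : D, d (pos x) (pos (y : X)) < ε := by
    intro x
    obtain ⟨y, hyD, hyd⟩ := hDd x ε hε
    exact ⟨⟨y, hyD⟩, hyd⟩
  choose y hyd using hy
  refine ⟨FreeGroup.mk (l.map fun p => ((y p.1 : X), p.2)),
    ⟨l.map fun p => (y p.1, p.2), by simp [Function.comp_def]⟩, ?_⟩
  -- bound the Graev distance by the rho of the two words
  have hmem : rho d (l.map some) ((l.map fun p => ((y p.1 : X), p.2)).map some) ∈
      {r : ℝ | ∃ w' v' : List (Letter X), w'.length = v'.length ∧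
        red w' = w ∧ red v' = FreeGroup.mk (l.map fun p => ((y p.1 : X), p.2)) ∧
        r = rho d w' v'} := by
    refine ⟨l.map some, (l.map fun p => ((y p.1 : X), p.2)).map some,
      by simp, ?_, red_map_some _, rfl⟩
    rw [red_map_some, hl, FreeGroup.mk_toWord]
  have hbdd : BddBelow {r : ℝ | ∃ w' v' : List (Letter X), w'.length = v'.length ∧
      red w' = w ∧ red v' = FreeGroup.mk (l.map fun p => ((y p.1 : X), p.2)) ∧
      r = rho d w' v'} := by
    refine ⟨0, ?_⟩
    rintro r ⟨w', v', -, -, -, rfl⟩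
    exact foldr_max_nonneg _
  have hle : graev d w (FreeGroup.mk (l.map fun p => ((y p.1 : X), p.2))) ≤
      rho d (l.map some) ((l.map fun p => ((y p.1 : X), p.2)).map some) :=
    csInf_le hbdd hmem
  refine lt_of_le_of_lt hle ?_
  -- rho < ε
  rw [rho, List.map_map]
  have hz : List.zipWith d (l.map some)
      (l.map (some ∘ fun p => ((y p.1 : X), p.2))) =
      l.map fun p => d (some p) (some ((y p.1 : X), p.2)) := by
    induction l with
    | nil => rfl
    | cons p l ih => simp [ih]
  rw [hz]
  refine foldr_max_lt _ hε ?_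
  intro r hr
  obtain ⟨p, -, rfl⟩ := List.mem_map.1 hr
  obtain ⟨x, b⟩ := p
  cases b with
  | true => exact hyd x
  | false =>
      have h2 : d (some (x, false)) (some ((y x : X), false)) =
          d (some (x, true)) (some ((y x : X), true)) := hd.2.1 x (y x)
      rw [h2]
      exact hyd x

end GraevStmt
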